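/- The sets {(0,0)} ∪ {(⌊φn⌋+1, ⌊φ²n⌋+1) : n ≥ 0} and {(0,1)} ∪ {(⌊φn⌋+2, ⌊φ²n⌋+2) : n ≥ 0} are disjoint subsets of ℕ × ℕ, where φ = (1+√5)/2. -/

import Mathlib

/- Since φ² = φ + 1, the second coordinate of the n-th pair exceeds the first by exactly n. So two
pairs from the two families that agree (in either order) have the same index, hence the same
first coordinate, contradicting the different shifts 1 and 2. -/

noncomputable def phi : ℝ := (1 + Real.sqrt 5) / 2

noncomputable def fl (n : ℕ) : ℕ := ⌊phi * n⌋₊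
noncomputable def fl2 (n : ℕ) : ℕ := ⌊phi ^ 2 * n⌋₊

theorem Nat.floor_add_one_mul_natCast {α : ℝ} (hα : 0 ≤ α) (n : ℕ) :
    ⌊(α + 1) * n⌋₊ = ⌊α * n⌋₊ + n := by
  rw [add_mul, one_mul, Nat.floor_add_natCast (by positivity)]

theorem phi_eq_goldenRatio : phi = Real.goldenRatio := rfl

theorem fl_zero : fl 0 = 0 := by
  simp [fl]

theorem fl2_eq_fl_add (n : ℕ) : fl2 n = fl n + n := by
  rw [fl2, fl, phi_eq_goldenRatio, Real.goldenRatio_sq,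
    Nat.floor_add_one_mul_natCast Real.goldenRatio_pos.le]

theorem shift_eq_of_pair_eq {n m c d : ℕ} (h : fl n + c = fl m + d)
    (h₂ : fl2 n + c = fl2 m + d) : c = d := by
  rw [fl2_eq_fl_add, fl2_eq_fl_add] at h₂
  obtain rfl : n = m := by omega
  omega

theorem shift_eq_of_pair_eq_swap {n m c d : ℕ} (h : fl n + c = fl2 m + d)
    (h₂ : fl2 n + c = fl m + d) : c = d := by
  rw [fl2_eq_fl_add] at h h₂
  obtain ⟨rfl, rfl⟩ : n = 0 ∧ m = 0 := by omega
  simpa [fl_zero] using h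

theorem stmt13 :
    {p : ℕ × ℕ | p = (0, 0) ∨ ∃ n : ℕ, p = (fl n + 1, fl2 n + 1) ∨ p = (fl2 n + 1, fl n + 1)} ∩
    {p : ℕ × ℕ | p = (0, 1) ∨ p = (1, 0) ∨ ∃ n : ℕ, p = (fl n + 2, fl2 n + 2) ∨ p = (fl2 n + 2, fl n + 2)} = ∅ := by
  rw [Set.eq_empty_iff_forall_notMem]
  rintro ⟨x, y⟩ ⟨h₁, h₂⟩
  simp only [Set.mem_ofPred_eq, Prod.mk.injEq] at h₁ h₂
  rcases h₁ with ⟨rfl, rfl⟩ | ⟨n, ⟨rfl, rfl⟩ | ⟨rfl, rfl⟩⟩ <;>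
    rcases h₂ with ⟨hx, hy⟩ | ⟨hx, hy⟩ | ⟨m, ⟨hx, hy⟩ | ⟨hx, hy⟩⟩
  all_goals first
    | omega
    | exact absurd (shift_eq_of_pair_eq hx hy) (by decide)
    | exact absurd (shift_eq_of_pair_eq_swap hx hy) (by decide)
    | exact absurd (shift_eq_of_pair_eq_swap hy hx) (by decide)
    | exact absurd (shift_eq_of_pair_eq hy hx) (by decide)
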